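/- Even–odd equality of majority-voting utility: for every even integer n ≥ 2 and all reals μ, q_0, q_1 ∈ [0,1], Σ_{x=0}^{n} (2f^maj_n(x) − 1)·( μ·C(n,x) q_1^x (1−q_1)^{n−x} − (1−μ)·C(n,x) q_0^x (1−q_0)^{n−x} ) = Σ_{x=0}^{n−1} (2f^maj_{n−1}(x) − 1)·( μ·C(n−1,x) q_1^x (1−q_1)^{n−1−x} − (1−μ)·C(n−1,x) q_0^x (1−q_0)^{n−1−x} ), where f^maj_k(x) = 0 for x < k/2, 1/2 for x = k/2, and 1 for x > k/2. That is, if the single-expert joint report law is the same, the majority-voting utility with an even number n of c.i.i.d. experts equals that with n−1 experts. -/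
import Mathlib


open Real Finset

/-- Majority voting `f^maj_k` for `k` experts. -/
noncomputable def fmaj (k : ℕ) : ℕ → ℝ := fun x =>
  if 2 * x < k then 0 else if 2 * x = k then 1 / 2 else 1

/-- Term of the signed majority-utility sum for a single success probability `p`. -/
noncomputable def mterm (n : ℕ) (p : ℝ) (x : ℕ) : ℝ :=
  (2 * fmaj n x - 1) * (n.choose x : ℝ) * p ^ x * (1 - p) ^ (n - x)

/-- auxiliary: the `A` part from Pascal's rule. -/
noncomputable def Af (k : ℕ) (p : ℝ) (x : ℕ) : ℝ :=
  (2 * fmaj (2*k+2) (x+1) - 1) * ((2*k+1).choose x : ℝ) * p ^ (x+1) * (1-p) ^ (2*k+1-x)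

/-- auxiliary: the `B` part from Pascal's rule. -/
noncomputable def Bff (k : ℕ) (p : ℝ) (x : ℕ) : ℝ :=
  (2 * fmaj (2*k+2) x - 1) * ((2*k+1).choose x : ℝ) * p ^ x * (1-p) ^ (2*k+2-x)

/-- auxiliary: the error term supported on the two middle points. -/
noncomputable def ef (k : ℕ) (p : ℝ) (x : ℕ) : ℝ :=
  ((2*k+1).choose x : ℝ) * p ^ x * (1-p) ^ (2*k+1-x) *
    (if x = k then p else if x = k + 1 then -(1-p) else 0)

lemma bracket (k x : ℕ) (p : ℝ) :
    p * (2 * fmaj (2*k+2) (x+1) - 1) + (1-p) * (2 * fmaj (2*k+2) x - 1)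
      = (2 * fmaj (2*k+1) x - 1) +
        (if x = k then p else if x = k + 1 then -(1-p) else 0) := by
  unfold fmaj
  split_ifs <;> first | ring1 | (exfalso; omega)

lemma choose_symm_mid (k : ℕ) : ((2*k+1).choose (k+1) : ℝ) = ((2*k+1).choose k : ℝ) := by
  congr 1
  rw [show k+1 = 2*k+1-k by omega]
  exact Nat.choose_symm (by omega)

lemma ef_sum (k : ℕ) (p : ℝ) : ∑ x ∈ Finset.range (2*k+2), ef k p x = 0 := by
  have h := Finset.sum_eq_add_of_mem (s := Finset.range (2*k+2)) (f := ef k p) k (k+1)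
    (Finset.mem_range.mpr (by omega)) (Finset.mem_range.mpr (by omega)) (by omega)
    (by
      intro c _ hc
      unfold ef
      rw [if_neg hc.1, if_neg hc.2, mul_zero])
  rw [h]
  unfold ef
  rw [if_pos rfl, if_neg (by omega : ¬ k + 1 = k), if_pos rfl,
    show 2*k+1-k = k+1 by omega, show 2*k+1-(k+1) = k by omega, choose_symm_mid k,
    pow_succ (1-p) k, pow_succ p k]
  ring

lemma key (k : ℕ) (p : ℝ) :
    ∑ x ∈ Finset.range (2*k+2+1), mterm (2*k+2) p x
      = ∑ x ∈ Finset.range (2*k+2), mterm (2*k+1) p x := by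
  have hsplit : ∀ x, mterm (2*k+2) p (x+1) = Af k p x + Bff k p (x+1) := by
    intro x
    have hc : ((2*k+2).choose (x+1) : ℝ)
        = ((2*k+1).choose x : ℝ) + ((2*k+1).choose (x+1) : ℝ) := by
      rw [show 2*k+2 = (2*k+1)+1 from rfl, Nat.choose_succ_succ]
      push_cast; ring
    have hexp : 2*k+2 - (x+1) = 2*k+1 - x := by omega
    simp only [mterm, Af, Bff, hc, hexp]
    ring
  have hB0 : mterm (2*k+2) p 0 = Bff k p 0 := by
    simp [mterm, Bff]
  have hBtop : Bff k p (2*k+2) = 0 := by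
    simp [Bff, Nat.choose_eq_zero_of_lt (by omega : 2*k+1 < 2*k+2)]
  have hmerge : ∀ x ∈ Finset.range (2*k+2),
      Af k p x + Bff k p x = mterm (2*k+1) p x + ef k p x := by
    intro x hx
    have hx' : x ≤ 2*k+1 := by
      have := Finset.mem_range.mp hx; omega
    have hexp : 2*k+2 - x = (2*k+1-x) + 1 := by omega
    have hb := bracket k x p
    calc Af k p x + Bff k p x
        = ((2*k+1).choose x : ℝ) * p ^ x * (1-p) ^ (2*k+1-x) *
            (p * (2 * fmaj (2*k+2) (x+1) - 1) + (1-p) * (2 * fmaj (2*k+2) x - 1)) := by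
          simp only [Af, Bff, hexp, pow_succ]; ring
      _ = ((2*k+1).choose x : ℝ) * p ^ x * (1-p) ^ (2*k+1-x) *
            ((2 * fmaj (2*k+1) x - 1) +
              (if x = k then p else if x = k + 1 then -(1-p) else 0)) := by rw [hb]
      _ = mterm (2*k+1) p x + ef k p x := by simp only [mterm, ef]; ring
  have h1 : ∑ x ∈ Finset.range (2*k+2+1), mterm (2*k+2) p x
      = (∑ x ∈ Finset.range (2*k+2), mterm (2*k+2) p (x+1)) + mterm (2*k+2) p 0 :=
    Finset.sum_range_succ' _ _
  have h2 : ∑ x ∈ Finset.range (2*k+2+1), Bff k p x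
      = (∑ x ∈ Finset.range (2*k+2), Bff k p (x+1)) + Bff k p 0 :=
    Finset.sum_range_succ' _ _
  have h3 : ∑ x ∈ Finset.range (2*k+2+1), Bff k p x
      = (∑ x ∈ Finset.range (2*k+2), Bff k p x) + Bff k p (2*k+2) :=
    Finset.sum_range_succ _ _
  calc ∑ x ∈ Finset.range (2*k+2+1), mterm (2*k+2) p x
      = (∑ x ∈ Finset.range (2*k+2), mterm (2*k+2) p (x+1)) + mterm (2*k+2) p 0 := h1
    _ = (∑ x ∈ Finset.range (2*k+2), (Af k p x + Bff k p (x+1))) + Bff k p 0 := by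
        rw [hB0, Finset.sum_congr rfl (fun x _ => hsplit x)]
    _ = (∑ x ∈ Finset.range (2*k+2), Af k p x) +
          ((∑ x ∈ Finset.range (2*k+2), Bff k p (x+1)) + Bff k p 0) := by
        rw [Finset.sum_add_distrib, add_assoc]
    _ = (∑ x ∈ Finset.range (2*k+2), Af k p x) +
          ((∑ x ∈ Finset.range (2*k+2), Bff k p x) + Bff k p (2*k+2)) := by
        rw [← h2, h3]
    _ = ∑ x ∈ Finset.range (2*k+2), (Af k p x + Bff k p x) := by
        rw [hBtop, add_zero, Finset.sum_add_distrib]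
    _ = ∑ x ∈ Finset.range (2*k+2), (mterm (2*k+1) p x + ef k p x) :=
        Finset.sum_congr rfl hmerge
    _ = ∑ x ∈ Finset.range (2*k+2), mterm (2*k+1) p x := by
        rw [Finset.sum_add_distrib, ef_sum, add_zero]

lemma expand_sum (m : ℕ) (μ q0 q1 : ℝ) :
    ∑ x ∈ Finset.range (m + 1),
        (2 * fmaj m x - 1) *
          (μ * (m.choose x : ℝ) * q1 ^ x * (1 - q1) ^ (m - x) -
            (1 - μ) * (m.choose x : ℝ) * q0 ^ x * (1 - q0) ^ (m - x))
      = μ * (∑ x ∈ Finset.range (m+1), mterm m q1 x)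
        - (1 - μ) * (∑ x ∈ Finset.range (m+1), mterm m q0 x) := by
  rw [Finset.mul_sum, Finset.mul_sum, ← Finset.sum_sub_distrib]
  exact Finset.sum_congr rfl (fun x _ => by unfold mterm; ring)

/-- **Even–odd equality of majority-voting utility.** For every even `n ≥ 2` and all
`μ, q₀, q₁ ∈ [0,1]`, the majority-voting utility with `n` c.i.i.d. experts (with prior
`Pr[ω=1] = μ` and conditionally i.i.d. reports `Pr[X_i=1|ω=1] = q₁`,
`Pr[X_i=1|ω=0] = q₀`) equals the majority-voting utility with `n−1` such experts. -/
theorem even_odd_majority_utility_equality (n : ℕ) (hn : 2 ≤ n) (heven : Even n)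
    (μ q0 q1 : ℝ) (hμ : μ ∈ Set.Icc (0 : ℝ) 1) (hq0 : q0 ∈ Set.Icc (0 : ℝ) 1)
    (hq1 : q1 ∈ Set.Icc (0 : ℝ) 1) :
    ∑ x ∈ Finset.range (n + 1),
        (2 * fmaj n x - 1) *
          (μ * (n.choose x : ℝ) * q1 ^ x * (1 - q1) ^ (n - x) -
            (1 - μ) * (n.choose x : ℝ) * q0 ^ x * (1 - q0) ^ (n - x)) =
      ∑ x ∈ Finset.range n,
        (2 * fmaj (n - 1) x - 1) *
          (μ * ((n - 1).choose x : ℝ) * q1 ^ x * (1 - q1) ^ (n - 1 - x) -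
            (1 - μ) * ((n - 1).choose x : ℝ) * q0 ^ x * (1 - q0) ^ (n - 1 - x)) := by
  obtain ⟨j, hj⟩ : ∃ j, n = 2*j + 2 := by
    obtain ⟨t, ht⟩ := heven; exact ⟨t - 1, by omega⟩
  subst hj
  rw [show 2*j+2-1 = 2*j+1 by omega]
  rw [expand_sum (2*j+2) μ q0 q1, show 2*j+2 = (2*j+1)+1 from rfl,
    expand_sum (2*j+1) μ q0 q1]
  rw [key j q1, key j q0]
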